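/- Let (T,r) be a rooted tree of order at least 2 whose branches (T_1,r_1), …, (T_k,r_k) are all of the same type. Then (T,r) is of the other type, m_0(T) = ∏_{j=1}^k m(T_j), and m_1(T) = ∑_{j=1}^k m_0(T_j) · ∏_{i ≠ j} m(T_i). -/

import Mathlib

namespace PaperMM

open SimpleGraph

/-- `M` is a matching of `G`: a set of edges of `G` that are pairwise disjoint. -/
def IsMatchingSet {V : Type} (G : SimpleGraph V) (M : Set (Sym2 V)) : Prop :=
  M ⊆ G.edgeSet ∧ M.Pairwise fun e f => ∀ v : V, ¬(v ∈ e ∧ v ∈ f)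

/-- The matching number `μ(G)`: the maximum cardinality of a matching of `G`. -/
noncomputable def matchNum {V : Type} (G : SimpleGraph V) : ℕ :=
  sSup {n | ∃ M : Set (Sym2 V), IsMatchingSet G M ∧ M.ncard = n}

/-- The set of maximum matchings of `G`. -/
def MaximumMatchings {V : Type} (G : SimpleGraph V) : Set (Set (Sym2 V)) :=
  {M | IsMatchingSet G M ∧ M.ncard = matchNum G}

/-- `m(G)`: the number of maximum matchings of `G`. -/
noncomputable def mm {V : Type} (G : SimpleGraph V) : ℕ := (MaximumMatchings G).ncard

/-- The matching `M` covers the vertex `v`. -/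
def Covers {V : Type} (M : Set (Sym2 V)) (v : V) : Prop := ∃ e ∈ M, v ∈ e

/-- `v` is of type A in `G`: some maximum matching of `G` does not cover `v`. -/
def TypeA {V : Type} (G : SimpleGraph V) (v : V) : Prop :=
  ∃ M ∈ MaximumMatchings G, ¬ Covers M v

/-- `v` is of type B in `G`: every maximum matching of `G` covers `v`. -/
def TypeB {V : Type} (G : SimpleGraph V) (v : V) : Prop := ¬ TypeA G v

/-- `G` has a perfect matching. -/
def HasPerfectMatching {V : Type} (G : SimpleGraph V) : Prop :=
  ∃ M : Set (Sym2 V), IsMatchingSet G M ∧ ∀ v, Covers M v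

/-- The degree of `v` in `G`. -/
noncomputable def degS {V : Type} (G : SimpleGraph V) (v : V) : ℕ := (G.neighborSet v).ncard

/-- `G` is an optimal tree: a tree maximising `m` among all trees of the same order. -/
def OptimalTree {V : Type} [Fintype V] (G : SimpleGraph V) : Prop :=
  G.IsTree ∧ ∀ H : SimpleGraph (Fin (Fintype.card V)), H.IsTree → mm H ≤ mm G

/-- The vertex set of the connected component of `s` in `G - st`. -/
def sideSet {V : Type} (G : SimpleGraph V) (s t : V) : Set V :=
  {v | (G.deleteEdges {s(s, t)}).Reachable s v}

/-- The connected component of `s` in `G - st`, as a graph. -/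
def sideGraph {V : Type} (G : SimpleGraph V) (s t : V) :
    SimpleGraph (sideSet G s t) :=
  (G.deleteEdges {s(s, t)}).induce (sideSet G s t)

theorem mem_sideSet_self {V : Type} (G : SimpleGraph V) (s t : V) : s ∈ sideSet G s t :=
  SimpleGraph.Reachable.refl s

/-- The root of the component of `s` in `G - st`, i.e. `s` itself. -/
def sideRoot {V : Type} (G : SimpleGraph V) (s t : V) : sideSet G s t :=
  ⟨s, mem_sideSet_self G s t⟩

/-- `μ(T_s)` where `T_s` is the component of `s` in `G - st`. -/
noncomputable def sideMu {V : Type} (G : SimpleGraph V) (s t : V) : ℕ := matchNum (sideGraph G s t)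

/-- `m(T_s)` where `T_s` is the component of `s` in `G - st`. -/
noncomputable def sideM {V : Type} (G : SimpleGraph V) (s t : V) : ℕ := mm (sideGraph G s t)

/-- `μ(T_s − s)` where `T_s` is the component of `s` in `G - st`. -/
noncomputable def sideMuDel {V : Type} (G : SimpleGraph V) (s t : V) : ℕ :=
  matchNum ((G.deleteEdges {s(s, t)}).induce (sideSet G s t \ {s}))

/-- `m(T_s − s)` where `T_s` is the component of `s` in `G - st`. -/
noncomputable def sideMDel {V : Type} (G : SimpleGraph V) (s t : V) : ℕ :=
  mm ((G.deleteEdges {s(s, t)}).induce (sideSet G s t \ {s}))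

/-- A rooted graph: a vertex type, a graph on it, and a root vertex. -/
structure RGraph : Type 1 where
  V : Type
  G : SimpleGraph V
  root : V

/-- `m(T)` for a rooted graph. -/
noncomputable def RGraph.m (T : RGraph) : ℕ := mm T.G

/-- `m_0(T) = m(T − r)` for a rooted graph with root `r`. -/
noncomputable def RGraph.m0 (T : RGraph) : ℕ := mm (T.G.induce {v | v ≠ T.root})

/-- `m_1(T)`: the number of maximum matchings of `G` covering `r`. -/
noncomputable def mmCover {V : Type} (G : SimpleGraph V) (r : V) : ℕ :=
  {M | M ∈ MaximumMatchings G ∧ Covers M r}.ncard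

/-- The order (number of vertices) of a rooted graph. -/
noncomputable def RGraph.order (T : RGraph) : ℕ := Nat.card T.V

/-- Isomorphism of rooted graphs: a graph isomorphism mapping root to root. -/
def RGraph.RIso (T T' : RGraph) : Prop :=
  ∃ φ : T.G ≃g T'.G, φ T.root = T'.root

/-- The one-vertex rooted tree `L`. -/
def rL : RGraph := ⟨PUnit, ⊥, PUnit.unit⟩

/-- The fork `F`: the root `0` is adjacent to `1`, which is adjacent to the leaves `2`, `3`. -/
def rF : RGraph :=
  ⟨Fin 4, SimpleGraph.fromRel (fun a b => (a = 0 ∧ b = 1) ∨ (a = 1 ∧ b = 2) ∨ (a = 1 ∧ b = 3)), 0⟩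

/-- The rooted tree `B₂*`: a single edge rooted at one endpoint. -/
def rB2 : RGraph := ⟨Fin 2, SimpleGraph.fromRel (fun a b => a = 0 ∧ b = 1), 0⟩

/-- The rooted tree `A₃*`: a path on three vertices rooted at an endpoint. -/
def rA3 : RGraph :=
  ⟨Fin 3, SimpleGraph.fromRel (fun a b => (a = 0 ∧ b = 1) ∨ (a = 1 ∧ b = 2)), 0⟩

/-- The `k`-claw: the star `K_{1,k}` rooted at its center. -/
def claw (k : ℕ) : RGraph :=
  ⟨Fin (k + 1), SimpleGraph.fromRel (fun a b => a = 0 ∧ b ≠ 0), 0⟩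

/-- The chain construction `C`: seven new vertices are added to the rooted tree `T`;
`Sum.inr 0` is the new root `s`, `Sum.inr 1` is the vertex `b` adjacent to `s`, to the new
leaf `Sum.inr 2`, to the root `Sum.inr 3` of a new fork (with center `Sum.inr 4` and leaves
`Sum.inr 5`, `Sum.inr 6`), and to the old root of `T`. -/
def consC (T : RGraph) : RGraph where
  V := T.V ⊕ Fin 7
  G := SimpleGraph.fromRel (fun a b =>
    (∃ x y, T.G.Adj x y ∧ a = Sum.inl x ∧ b = Sum.inl y) ∨
    (a = Sum.inr 0 ∧ b = Sum.inr 1) ∨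
    (a = Sum.inr 1 ∧ b = Sum.inr 2) ∨
    (a = Sum.inr 1 ∧ b = Sum.inr 3) ∨
    (a = Sum.inr 3 ∧ b = Sum.inr 4) ∨
    (a = Sum.inr 4 ∧ b = Sum.inr 5) ∨
    (a = Sum.inr 4 ∧ b = Sum.inr 6) ∨
    (a = Sum.inr 1 ∧ b = Sum.inl T.root))
  root := Sum.inr 0

/-- `hang T S`: the disjoint union of rooted graphs `T` and `S` together with an edge
joining their roots; the root of the result is the root of `T`. -/
def hang (T S : RGraph) : RGraph where
  V := T.V ⊕ S.V
  G := SimpleGraph.fromRel (fun a b =>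
    (∃ x y, T.G.Adj x y ∧ a = Sum.inl x ∧ b = Sum.inl y) ∨
    (∃ x y, S.G.Adj x y ∧ a = Sum.inr x ∧ b = Sum.inr y) ∨
    (a = Sum.inl T.root ∧ b = Sum.inr S.root))
  root := Sum.inl T.root

/-- The rooted subtree of `G` cut off by the edge `st` on the side of `s`, rooted at `s`. -/
def sideRG {V : Type} (G : SimpleGraph V) (s t : V) : RGraph :=
  ⟨sideSet G s t, sideGraph G s t, sideRoot G s t⟩

/-- `y` lies on the path from `x` to the root of `T`. -/
def OnRootPath (T : RGraph) (x y : T.V) : Prop := ∀ p : T.G.Walk x T.root, y ∈ p.support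

/-- The rooted graph `T` contains a `k`-claw: either `T` itself is a `k`-claw, or
there is an edge `xy` of `T` with `y` on the path from `x` to the root such that
the component of `x` in `T − xy`, rooted at `x`, is a `k`-claw. -/
def ContainsClaw (T : RGraph) (k : ℕ) : Prop :=
  T.RIso (claw k) ∨
  ∃ x y : T.V, T.G.Adj x y ∧ OnRootPath T x y ∧ (sideRG T.G x y).RIso (claw k)

/-- The vertex set of the branch of the rooted graph `(G, r)` containing the
neighbour `x` of `r`: all vertices reachable from `x` avoiding `r`. -/
def branchSet {V : Type} (G : SimpleGraph V) (r x : V) : Set V :=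
  {v | ∃ p : G.Walk x v, r ∉ p.support}

/-- `m` of the branch of `(G, r)` at the neighbour `x`. -/
noncomputable def branchM {V : Type} (G : SimpleGraph V) (r x : V) : ℕ :=
  mm (G.induce (branchSet G r x))

/-- `m_0` of the branch of `(G, r)` at the neighbour `x` (the branch is rooted at `x`). -/
noncomputable def branchM0 {V : Type} (G : SimpleGraph V) (r x : V) : ℕ :=
  mm (G.induce (branchSet G r x \ {x}))

/-- The branch of `(G, r)` at the neighbour `x`, rooted at `x`, is of type A. -/
def BranchTypeA {V : Type} (G : SimpleGraph V) (r x : V) : Prop :=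
  ∃ h : x ∈ branchSet G r x, TypeA (G.induce (branchSet G r x)) ⟨x, h⟩

/-- The branch of `(G, r)` at the neighbour `x`, rooted at `x`, is of type B. -/
def BranchTypeB {V : Type} (G : SimpleGraph V) (r x : V) : Prop :=
  ∃ h : x ∈ branchSet G r x, TypeB (G.induce (branchSet G r x)) ⟨x, h⟩

/-- The bipartition condition for rooted trees: a one-vertex rooted tree fulfils it,
and a rooted tree fulfils it if all of its branches (each rooted at the corresponding
neighbour of the root) fulfil it and have type different from the type of the root. -/
inductive BipCond : {V : Type} → SimpleGraph V → V → Prop where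
  | single {V : Type} (G : SimpleGraph V) (r : V) (h : ∀ v : V, v = r) : BipCond G r
  | node {V : Type} (G : SimpleGraph V) (r : V)
      (hrec : ∀ (x : V), G.Adj r x → ∀ (hm : x ∈ branchSet G r x),
        BipCond (G.induce (branchSet G r x)) ⟨x, hm⟩)
      (htype : ∀ (x : V), G.Adj r x → ∀ (hm : x ∈ branchSet G r x),
        ¬ (TypeA G r ↔ TypeA (G.induce (branchSet G r x)) ⟨x, hm⟩)) :
      BipCond G r

/-- The integer sequence `G_j` with `G_0 = 0`, `G_1 = 1`, `G_{j+2} = 11 G_{j+1} − 9 G_j`. -/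
def Gseq : ℕ → ℤ
  | 0 => 0
  | 1 => 1
  | (n + 2) => 11 * Gseq (n + 1) - 9 * Gseq n

/-- Attach one new pendant vertex to the vertex `w` of `H`. -/
def addLeaf {W : Type} (H : SimpleGraph W) (w : W) : SimpleGraph (W ⊕ Unit) :=
  SimpleGraph.fromRel (fun a b =>
    (∃ x y, H.Adj x y ∧ a = Sum.inl x ∧ b = Sum.inl y) ∨
    (a = Sum.inl w ∧ b = Sum.inr ()))

/-- The 6-vertex spider with legs of lengths 1, 1 and 3 attached to the center `0`. -/
def spider6 : SimpleGraph (Fin 6) :=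
  SimpleGraph.fromRel (fun a b =>
    (a = 0 ∧ b = 1) ∨ (a = 0 ∧ b = 2) ∨ (a = 0 ∧ b = 3) ∨ (a = 3 ∧ b = 4) ∨ (a = 4 ∧ b = 5))

/-!
The branches `T_x` of `(T, r)` are pairwise separated (disjoint, with no edges between them), so
a matching of `T - r` or of `T - r - x` is exactly a union of matchings of the branches (with
`T_x - x` in place of `T_x`): `μ` adds up and `m` multiplies. Hence deleting `x` from `T - r`
keeps `μ` if `T_x` has type A and lowers it by one if `T_x` has type B. A matching of `T` either
avoids `r` or is an edge `rx` plus a matching of `T - r - x`, so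
`μ(T) = max (μ(T - r), 1 + max_x μ(T - r - x))`. If all branches have type A this is
`μ(T - r) + 1`, so `r` has type B; if all have type B it is `μ(T - r)`, so `r` has type A. In both
cases `μ(T) = μ(T - r - x) + 1` for every neighbour `x`, so the maximum matchings covering `r`
through the edge `rx` correspond to the maximum matchings of `T - r - x`, giving `m₁`.
-/
section MatchingsOn

variable {V : Type} {G : SimpleGraph V} {S T : Set V} {M P : Set (Sym2 V)} {x : V}

/-- Matchings of `G` using only vertices of `S`: they play the role of the matchings of
`G.induce S` without passing to the subtype. -/
def IsMatchingOn (G : SimpleGraph V) (S : Set V) (M : Set (Sym2 V)) : Prop :=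
  IsMatchingSet G M ∧ M ⊆ S.sym2

noncomputable def matchNumOn (G : SimpleGraph V) (S : Set V) : ℕ :=
  sSup {n | ∃ M, IsMatchingOn G S M ∧ M.ncard = n}

def MaxMatchingsOn (G : SimpleGraph V) (S : Set V) : Set (Set (Sym2 V)) :=
  {M | IsMatchingOn G S M ∧ M.ncard = matchNumOn G S}

noncomputable def mmOn (G : SimpleGraph V) (S : Set V) : ℕ := (MaxMatchingsOn G S).ncard

lemma IsMatchingSet.eq_of_mem (hM : IsMatchingSet G M) {e f : Sym2 V} (he : e ∈ M) (hf : f ∈ M)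
    {v : V} (hve : v ∈ e) (hvf : v ∈ f) : e = f :=
  by_contra fun hne => hM.2 he hf hne v ⟨hve, hvf⟩

lemma IsMatchingSet.not_covers_sdiff_singleton (hM : IsMatchingSet G M) {e : Sym2 V} (he : e ∈ M)
    {v : V} (hv : v ∈ e) : ¬ Covers (M \ {e}) v :=
  fun ⟨_, hf, hvf⟩ => hf.2 (hM.eq_of_mem hf.1 he hvf hv)

lemma IsMatchingSet.anti (hM : IsMatchingSet G M) (hPM : P ⊆ M) : IsMatchingSet G P :=
  ⟨hPM.trans hM.1, hM.2.mono hPM⟩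

lemma IsMatchingOn.mem (h : IsMatchingOn G S M) {e : Sym2 V} (he : e ∈ M) {v : V} (hv : v ∈ e) :
    v ∈ S :=
  Set.mem_sym2_iff_subset.1 (h.2 he) hv

lemma IsMatchingOn.mono (h : IsMatchingOn G S M) (hST : S ⊆ T) : IsMatchingOn G T M :=
  ⟨h.1, fun _ he => Set.mem_sym2_iff_subset.2 ((Set.mem_sym2_iff_subset.1 (h.2 he)).trans hST)⟩

lemma IsMatchingOn.anti (h : IsMatchingOn G S M) (hPM : P ⊆ M) : IsMatchingOn G S P :=
  ⟨h.1.anti hPM, hPM.trans h.2⟩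

lemma isMatchingOn_empty : IsMatchingOn G S ∅ :=
  ⟨⟨Set.empty_subset _, Set.pairwise_empty _⟩, Set.empty_subset _⟩

lemma isMatchingOn_univ : IsMatchingOn G Set.univ M ↔ IsMatchingSet G M := by
  simp [IsMatchingOn]

lemma matchNum_eq_matchNumOn_univ : matchNum G = matchNumOn G Set.univ := by
  simp only [matchNum, matchNumOn, isMatchingOn_univ]

lemma maximumMatchings_eq_maxMatchingsOn_univ :
    MaximumMatchings G = MaxMatchingsOn G Set.univ := by
  simp only [MaximumMatchings, MaxMatchingsOn, isMatchingOn_univ, matchNum_eq_matchNumOn_univ]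

lemma isMatchingOn_sdiff_singleton_iff :
    IsMatchingOn G (S \ {x}) M ↔ IsMatchingOn G S M ∧ ¬ Covers M x := by
  refine ⟨fun h => ⟨h.mono Set.sdiff_subset, fun ⟨e, he, hxe⟩ => (h.mem he hxe).2 rfl⟩, ?_⟩
  rintro ⟨h, hc⟩
  refine ⟨h.1, fun e he => Set.mem_sym2_iff_subset.2 fun v hv => ⟨h.mem he hv, ?_⟩⟩
  rintro rfl
  exact hc ⟨e, he, hv⟩

lemma matchNumOn_le {n : ℕ} (h : ∀ M, IsMatchingOn G S M → M.ncard ≤ n) :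
    matchNumOn G S ≤ n :=
  csSup_le ⟨0, ∅, isMatchingOn_empty, Set.ncard_empty _⟩ (by rintro _ ⟨M, hM, rfl⟩; exact h M hM)

lemma isMatchingOn_empty_iff : IsMatchingOn G ∅ M ↔ M = ∅ := by
  refine ⟨fun h => Set.subset_empty_iff.1 (Set.sym2_empty ▸ h.2), ?_⟩
  rintro rfl
  exact isMatchingOn_empty

lemma matchNumOn_empty : matchNumOn G ∅ = 0 :=
  Nat.le_zero.1 <| matchNumOn_le fun M hM => by rw [isMatchingOn_empty_iff.1 hM, Set.ncard_empty]

lemma mmOn_empty : mmOn G ∅ = 1 := by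
  have : MaxMatchingsOn G ∅ = {∅} := by
    ext M
    simp only [MaxMatchingsOn, Set.mem_ofPred_eq, Set.mem_singleton_iff, isMatchingOn_empty_iff,
      matchNumOn_empty, and_iff_left_iff_imp]
    rintro rfl
    exact Set.ncard_empty _
  rw [mmOn, this, Set.ncard_singleton]

variable [Finite V]

lemma bddAbove_matchingSizes : BddAbove {n | ∃ M, IsMatchingOn G S M ∧ M.ncard = n} :=
  ⟨Nat.card (Sym2 V), by rintro _ ⟨M, -, rfl⟩; exact Set.ncard_le_card M⟩

lemma IsMatchingOn.ncard_le (h : IsMatchingOn G S M) : M.ncard ≤ matchNumOn G S :=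
  le_csSup bddAbove_matchingSizes ⟨M, h, rfl⟩

lemma exists_mem_maxMatchingsOn (G : SimpleGraph V) (S : Set V) :
    ∃ M, M ∈ MaxMatchingsOn G S := by
  obtain ⟨M, hM, hc⟩ := Nat.sSup_mem (s := {n | ∃ M, IsMatchingOn G S M ∧ M.ncard = n})
    ⟨0, ∅, isMatchingOn_empty, Set.ncard_empty _⟩ bddAbove_matchingSizes
  exact ⟨M, hM, hc⟩

lemma matchNumOn_mono (hST : S ⊆ T) : matchNumOn G S ≤ matchNumOn G T :=
  matchNumOn_le fun _ hM => (hM.mono hST).ncard_le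

lemma matchNumOn_le_sdiff_singleton_add_one : matchNumOn G S ≤ matchNumOn G (S \ {x}) + 1 := by
  obtain ⟨M, hM, hc⟩ := exists_mem_maxMatchingsOn G S
  by_cases hcov : Covers M x
  · obtain ⟨e, he, hxe⟩ := hcov
    have hMe : IsMatchingOn G (S \ {x}) (M \ {e}) := isMatchingOn_sdiff_singleton_iff.2
      ⟨hM.anti Set.sdiff_subset, hM.1.not_covers_sdiff_singleton he hxe⟩
    have := hMe.ncard_le
    rw [← hc, ← Set.ncard_sdiff_singleton_add_one he]
    omega
  · have := (isMatchingOn_sdiff_singleton_iff.2 ⟨hM, hcov⟩).ncard_le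
    omega

lemma exists_maxMatchingsOn_not_covers_iff :
    (∃ M ∈ MaxMatchingsOn G S, ¬ Covers M x) ↔ matchNumOn G (S \ {x}) = matchNumOn G S := by
  constructor
  · rintro ⟨M, ⟨hM, hc⟩, hcov⟩
    exact le_antisymm (matchNumOn_mono Set.sdiff_subset)
      (hc ▸ (isMatchingOn_sdiff_singleton_iff.2 ⟨hM, hcov⟩).ncard_le)
  · intro heq
    obtain ⟨M, hM, hc⟩ := exists_mem_maxMatchingsOn G (S \ {x})
    obtain ⟨hM', hcov⟩ := isMatchingOn_sdiff_singleton_iff.1 hM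
    exact ⟨M, ⟨hM', hc.trans heq⟩, hcov⟩

end MatchingsOn

section Separated

variable {V : Type} {G : SimpleGraph V} {A A' B B' : Set V} {M P Q : Set (Sym2 V)}

def Separated (G : SimpleGraph V) (A B : Set V) : Prop :=
  Disjoint A B ∧ ∀ u ∈ A, ∀ v ∈ B, ¬ G.Adj u v

lemma Separated.symm (h : Separated G A B) : Separated G B A :=
  ⟨h.1.symm, fun u hu v hv huv => h.2 v hv u hu huv.symm⟩

lemma Separated.mono (h : Separated G A B) (hA : A' ⊆ A) (hB : B' ⊆ B) : Separated G A' B' :=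
  ⟨h.1.mono hA hB, fun u hu v hv => h.2 u (hA hu) v (hB hv)⟩

lemma separated_biUnion_right {ι : Type*} {t : Finset ι} {B : ι → Set V}
    (h : ∀ i ∈ t, Separated G A (B i)) : Separated G A (⋃ i ∈ t, B i) := by
  refine ⟨Set.disjoint_iUnion₂_right.2 fun i hi => (h i hi).1, fun u hu v hv => ?_⟩
  obtain ⟨i, hi, hv⟩ := Set.mem_iUnion₂.1 hv
  exact (h i hi).2 u hu v hv

lemma disjoint_sym2 (h : Disjoint A B) : Disjoint A.sym2 B.sym2 :=
  Set.disjoint_iff_inter_eq_empty.2 (by rw [← Set.sym2_inter, h.inter_eq, Set.sym2_empty])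

lemma disjoint_inter_sym2 (hAB : Disjoint A B) : Disjoint (M ∩ A.sym2) (M ∩ B.sym2) :=
  (disjoint_sym2 hAB).mono Set.inter_subset_right Set.inter_subset_right

lemma IsMatchingOn.union (hP : IsMatchingOn G A P) (hQ : IsMatchingOn G B Q) (hAB : Disjoint A B) :
    IsMatchingOn G (A ∪ B) (P ∪ Q) := by
  refine ⟨⟨Set.union_subset hP.1.1 hQ.1.1, ?_⟩,
    Set.union_subset (hP.mono Set.subset_union_left).2 (hQ.mono Set.subset_union_right).2⟩
  have hPQ : ∀ e ∈ P, ∀ f ∈ Q, ∀ v, ¬(v ∈ e ∧ v ∈ f) := fun e he f hf v hv =>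
    Set.disjoint_left.1 hAB (hP.mem he hv.1) (hQ.mem hf hv.2)
  rintro e (he | he) f (hf | hf) hne v hv
  · exact hP.1.2 he hf hne v hv
  · exact hPQ e he f hf v hv
  · exact hPQ f hf e he v hv.symm
  · exact hQ.1.2 he hf hne v hv

lemma IsMatchingOn.inter_sym2 (h : IsMatchingOn G B M) (A : Set V) :
    IsMatchingOn G A (M ∩ A.sym2) :=
  ⟨h.1.anti Set.inter_subset_left, Set.inter_subset_right⟩

lemma IsMatchingOn.inter_sym2_union (h : IsMatchingOn G (A ∪ B) M) (hAB : Separated G A B) :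
    M ∩ A.sym2 ∪ M ∩ B.sym2 = M := by
  rw [← Set.inter_union_distrib_left, Set.inter_eq_left]
  intro e he
  induction e using Sym2.ind with
  | h u v =>
    have huv : G.Adj u v := h.1.1 he
    obtain ⟨hu, hv⟩ := h.2 he
    rcases hu with hu | hu <;> rcases hv with hv | hv
    · exact Or.inl ⟨hu, hv⟩
    · exact absurd huv (hAB.2 u hu v hv)
    · exact absurd huv.symm (hAB.2 v hv u hu)
    · exact Or.inr ⟨hu, hv⟩

lemma union_inter_sym2_left (hAB : Disjoint A B) (hP : P ⊆ A.sym2) (hQ : Q ⊆ B.sym2) :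
    (P ∪ Q) ∩ A.sym2 = P := by
  rw [Set.union_inter_distrib_right, Set.inter_eq_left.2 hP,
    (Set.disjoint_of_subset_left hQ (disjoint_sym2 hAB).symm).inter_eq, Set.union_empty]

variable [Finite V]

lemma matchNumOn_union (hAB : Separated G A B) :
    matchNumOn G (A ∪ B) = matchNumOn G A + matchNumOn G B := by
  apply le_antisymm
  · refine matchNumOn_le fun M hM => ?_
    rw [← hM.inter_sym2_union hAB, Set.ncard_union_eq (disjoint_inter_sym2 hAB.1)]
    exact add_le_add (hM.inter_sym2 A).ncard_le (hM.inter_sym2 B).ncard_le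
  · obtain ⟨P, hP, hPc⟩ := exists_mem_maxMatchingsOn G A
    obtain ⟨Q, hQ, hQc⟩ := exists_mem_maxMatchingsOn G B
    have := (hP.union hQ hAB.1).ncard_le
    rwa [Set.ncard_union_eq ((disjoint_sym2 hAB.1).mono hP.2 hQ.2), hPc, hQc] at this

lemma maxMatchingsOn_union (hAB : Separated G A B) :
    MaxMatchingsOn G (A ∪ B) =
      (fun p => p.1 ∪ p.2) '' (MaxMatchingsOn G A ×ˢ MaxMatchingsOn G B) := by
  ext M
  constructor
  · rintro ⟨hM, hc⟩
    have hA := (hM.inter_sym2 A).ncard_le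
    have hB := (hM.inter_sym2 B).ncard_le
    have hsum := Set.ncard_union_eq (disjoint_inter_sym2 (M := M) hAB.1)
    rw [hM.inter_sym2_union hAB, hc, matchNumOn_union hAB] at hsum
    exact ⟨(M ∩ A.sym2, M ∩ B.sym2),
      ⟨⟨hM.inter_sym2 A, show (M ∩ A.sym2).ncard = _ by omega⟩,
        ⟨hM.inter_sym2 B, show (M ∩ B.sym2).ncard = _ by omega⟩⟩, hM.inter_sym2_union hAB⟩
  · rintro ⟨⟨P, Q⟩, ⟨⟨hP, hPc⟩, ⟨hQ, hQc⟩⟩, rfl⟩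
    refine ⟨hP.union hQ hAB.1, ?_⟩
    rw [Set.ncard_union_eq ((disjoint_sym2 hAB.1).mono hP.2 hQ.2), hPc, hQc, matchNumOn_union hAB]

lemma mmOn_union (hAB : Separated G A B) : mmOn G (A ∪ B) = mmOn G A * mmOn G B := by
  have hinj : Set.InjOn (fun p : Set (Sym2 V) × Set (Sym2 V) => p.1 ∪ p.2)
      (MaxMatchingsOn G A ×ˢ MaxMatchingsOn G B) := by
    rintro ⟨P, Q⟩ ⟨⟨hP, -⟩, ⟨hQ, -⟩⟩ ⟨P', Q'⟩ ⟨⟨hP', -⟩, ⟨hQ', -⟩⟩ h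
    dsimp only at hP hQ hP' hQ' h
    have hPP' : P = P' := by
      rw [← union_inter_sym2_left hAB.1 hP.2 hQ.2, h, union_inter_sym2_left hAB.1 hP'.2 hQ'.2]
    have hQQ' : Q = Q' := by
      rw [← union_inter_sym2_left hAB.symm.1 hQ.2 hP.2, Set.union_comm, h, Set.union_comm,
        union_inter_sym2_left hAB.symm.1 hQ'.2 hP'.2]
    rw [hPP', hQQ']
  rw [mmOn, maxMatchingsOn_union hAB, hinj.ncard_image, Set.ncard_prod, mmOn, mmOn]

variable {ι : Type*} {t : Finset ι} {S : ι → Set V}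

lemma mmOn_biUnion (h : (t : Set ι).Pairwise fun i j => Separated G (S i) (S j)) :
    mmOn G (⋃ i ∈ t, S i) = ∏ i ∈ t, mmOn G (S i) := by
  classical
  induction t using Finset.induction_on with
  | empty => simp [mmOn_empty]
  | insert a t ha ih =>
    have hsep : Separated G (S a) (⋃ i ∈ t, S i) := separated_biUnion_right fun i hi =>
      h (by simp) (by simp [hi]) (by rintro rfl; exact ha hi)
    rw [Finset.set_biUnion_insert, mmOn_union hsep, ih (h.mono (by simp)),
      Finset.prod_insert ha]

end Separated

section Induce

variable {V : Type} {G : SimpleGraph V} {S : Set V}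

lemma injective_map_val : Function.Injective (Sym2.map (Subtype.val : S → V)) :=
  Sym2.map.injective Subtype.val_injective

lemma val_mem_map_val {e : Sym2 S} {w : S} : (w : V) ∈ Sym2.map Subtype.val e ↔ w ∈ e :=
  Sym2.mem_map.trans ⟨fun ⟨_, ha, hw⟩ => Subtype.ext hw ▸ ha, fun hw => ⟨w, hw, rfl⟩⟩

lemma edgeSet_induce : (G.induce S).edgeSet = Sym2.map Subtype.val ⁻¹' G.edgeSet := by
  ext e
  induction e using Sym2.ind
  simp

lemma range_map_val : Set.range (Sym2.map (Subtype.val : S → V)) = S.sym2 := by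
  rw [← Set.image_univ, ← Set.sym2_univ, ← Set.sym2_image, Set.image_univ, Subtype.range_coe]

lemma isMatchingSet_induce_iff {M : Set (Sym2 S)} :
    IsMatchingSet (G.induce S) M ↔ IsMatchingOn G S (Sym2.map Subtype.val '' M) := by
  have hdisj : ∀ e f : Sym2 S, (∀ w : S, ¬(w ∈ e ∧ w ∈ f)) ↔
      ∀ v : V, ¬(v ∈ Sym2.map Subtype.val e ∧ v ∈ Sym2.map Subtype.val f) := by
    refine fun e f => ⟨fun h v ⟨hve, hvf⟩ => ?_,
      fun h w hw => h w ⟨val_mem_map_val.2 hw.1, val_mem_map_val.2 hw.2⟩⟩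
    obtain ⟨a, ha, rfl⟩ := Sym2.mem_map.1 hve
    exact h a ⟨ha, val_mem_map_val.1 hvf⟩
  simp only [IsMatchingSet, IsMatchingOn, edgeSet_induce, ← Set.image_subset_iff,
    injective_map_val.injOn.pairwise_image, ← range_map_val, Set.image_subset_range, and_true]
  simp only [hdisj]

lemma IsMatchingOn.exists_image_eq {M : Set (Sym2 V)} (h : IsMatchingOn G S M) :
    ∃ M' : Set (Sym2 S), Sym2.map Subtype.val '' M' = M :=
  ⟨_, Set.image_preimage_eq_of_subset (range_map_val (S := S) ▸ h.2)⟩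

lemma ncard_image_map_val (M : Set (Sym2 S)) : (Sym2.map Subtype.val '' M).ncard = M.ncard :=
  Set.ncard_image_of_injective _ injective_map_val

lemma matchNum_induce : matchNum (G.induce S) = matchNumOn G S := by
  unfold matchNum matchNumOn
  congr 1
  ext n
  constructor
  · rintro ⟨M, hM, rfl⟩
    exact ⟨_, isMatchingSet_induce_iff.1 hM, ncard_image_map_val M⟩
  · rintro ⟨M, hM, rfl⟩
    obtain ⟨M', rfl⟩ := hM.exists_image_eq
    exact ⟨M', isMatchingSet_induce_iff.2 hM, (ncard_image_map_val M').symm⟩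

lemma image_maximumMatchings_induce :
    Set.image (Sym2.map Subtype.val) '' MaximumMatchings (G.induce S) = MaxMatchingsOn G S := by
  ext M
  constructor
  · rintro ⟨M', ⟨hM', hc⟩, rfl⟩
    exact ⟨isMatchingSet_induce_iff.1 hM', by rw [ncard_image_map_val, hc, matchNum_induce]⟩
  · rintro ⟨hM, hc⟩
    obtain ⟨M', rfl⟩ := hM.exists_image_eq
    exact ⟨M', ⟨isMatchingSet_induce_iff.2 hM, by rw [← ncard_image_map_val, hc, matchNum_induce]⟩,
      rfl⟩

lemma mm_induce : mm (G.induce S) = mmOn G S := by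
  rw [mm, mmOn, ← image_maximumMatchings_induce,
    Set.ncard_image_of_injective _ (Set.image_injective.2 injective_map_val)]

lemma covers_image_map_val_iff {M : Set (Sym2 S)} {x : V} (hx : x ∈ S) :
    Covers (Sym2.map Subtype.val '' M) x ↔ Covers M ⟨x, hx⟩ := by
  constructor
  · rintro ⟨_, ⟨e, he, rfl⟩, hxe⟩
    exact ⟨e, he, val_mem_map_val.1 hxe⟩
  · rintro ⟨e, he, hxe⟩
    exact ⟨_, ⟨e, he, rfl⟩, val_mem_map_val.2 hxe⟩

lemma typeA_induce_iff {x : V} (hx : x ∈ S) :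
    TypeA (G.induce S) ⟨x, hx⟩ ↔ ∃ M ∈ MaxMatchingsOn G S, ¬ Covers M x := by
  rw [← image_maximumMatchings_induce, TypeA, Set.exists_mem_image]
  simp only [covers_image_map_val_iff hx]

end Induce

section Branches

variable {V : Type} {G : SimpleGraph V} {r x y u v : V}

lemma mem_branchSet_self (hx : G.Adj r x) : x ∈ branchSet G r x :=
  ⟨Walk.nil, by simpa using hx.ne⟩

lemma root_notMem_branchSet : r ∉ branchSet G r x :=
  fun ⟨p, hp⟩ => hp p.end_mem_support

lemma mem_branchSet_of_adj (hv : v ∈ branchSet G r x) (hvu : G.Adj v u) (hu : u ≠ r) :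
    u ∈ branchSet G r x := by
  obtain ⟨p, hp⟩ := hv
  exact ⟨p.concat hvu, by simpa [Walk.support_concat, hp] using hu.symm⟩

lemma exists_mem_branchSet (hG : G.Connected) (hv : v ≠ r) :
    ∃ x, G.Adj r x ∧ v ∈ branchSet G r x := by
  classical
  obtain ⟨p, hp⟩ : ∃ p : G.Walk r v, p.IsPath := ⟨_, (hG.preconnected r v).some.toPath.2⟩
  cases p with
  | nil => exact absurd rfl hv
  | cons h q => exact ⟨_, h, q, ((Walk.cons_isPath_iff h q).1 hp).2⟩

/-- Two branches meeting in `v` would give two paths from `r` to `v` leaving `r` through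
different neighbours. -/
lemma disjoint_branchSet (hG : G.IsAcyclic) (hx : G.Adj r x) (hy : G.Adj r y) (hxy : x ≠ y) :
    Disjoint (branchSet G r x) (branchSet G r y) := by
  classical
  refine Set.disjoint_left.2 fun v ⟨p, hp⟩ ⟨q, hq⟩ => hxy ?_
  have hp' : r ∉ p.toPath.val.support := fun h => hp (Walk.support_toPath_subset_support p h)
  have hq' : r ∉ q.toPath.val.support := fun h => hq (Walk.support_toPath_subset_support q h)
  have := congrArg (fun P : G.Path r v => P.val.getVert 1)
    ((hG.subsingleton_path r v).elim ⟨.cons hx p.toPath, p.toPath.2.cons hp'⟩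
      ⟨.cons hy q.toPath, q.toPath.2.cons hq'⟩)
  simpa using this

lemma separated_branchSet (hG : G.IsAcyclic) (hx : G.Adj r x) (hy : G.Adj r y) (hxy : x ≠ y) :
    Separated G (branchSet G r x) (branchSet G r y) :=
  ⟨disjoint_branchSet hG hx hy hxy, fun _ hu _ hv huv => Set.disjoint_left.1
    (disjoint_branchSet hG hx hy hxy)
    (mem_branchSet_of_adj hu huv fun h => root_notMem_branchSet (h ▸ hv)) hv⟩

variable [Finite V]

lemma biUnion_branchSet (hG : G.Connected) :
    ⋃ x ∈ (G.neighborSet r).toFinite.toFinset, branchSet G r x = Set.univ \ {r} := by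
  ext v
  simp only [Set.mem_iUnion, Set.Finite.mem_toFinset, mem_neighborSet, exists_prop,
    Set.mem_sdiff, Set.mem_univ, Set.mem_singleton_iff, true_and]
  refine ⟨fun ⟨x, _, hv⟩ hvr => root_notMem_branchSet (hvr ▸ hv), exists_mem_branchSet hG⟩

lemma pairwise_separated_branchSet (hG : G.IsAcyclic) {t : Finset V}
    (ht : t ⊆ (G.neighborSet r).toFinite.toFinset) :
    (t : Set V).Pairwise fun x y => Separated G (branchSet G r x) (branchSet G r y) :=
  fun x hx y hy hxy => separated_branchSet hG (by simpa using ht hx) (by simpa using ht hy) hxy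

variable [DecidableEq V]

lemma union_biUnion_erase_branchSet (hG : G.Connected) (hx : G.Adj r x) :
    branchSet G r x ∪ ⋃ y ∈ (G.neighborSet r).toFinite.toFinset.erase x, branchSet G r y =
      Set.univ \ {r} := by
  rw [← Finset.set_biUnion_insert, Finset.insert_erase (by simpa using hx), biUnion_branchSet hG]

lemma separated_biUnion_erase_branchSet (hG : G.IsAcyclic) (hx : G.Adj r x) :
    Separated G (branchSet G r x)
      (⋃ y ∈ (G.neighborSet r).toFinite.toFinset.erase x, branchSet G r y) :=
  separated_biUnion_right fun y hy => by
    obtain ⟨hyx, hy⟩ := Finset.mem_erase.1 hy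
    exact separated_branchSet hG hx (by simpa using hy) hyx.symm

end Branches

section Root

variable {V : Type} {G : SimpleGraph V} {r x : V} {M P : Set (Sym2 V)}

lemma IsMatchingSet.exists_adj_of_covers (hM : IsMatchingSet G M) (hc : Covers M r) :
    ∃ x, G.Adj r x ∧ s(r, x) ∈ M := by
  obtain ⟨e, he, hre⟩ := hc
  obtain ⟨x, rfl⟩ := Sym2.mem_iff_exists.1 hre
  exact ⟨x, hM.1 he, he⟩

lemma isMatchingOn_univ_sdiff_sdiff_iff :
    IsMatchingOn G ((Set.univ \ {r}) \ {x}) M ↔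
      IsMatchingSet G M ∧ ¬ Covers M r ∧ ¬ Covers M x := by
  rw [isMatchingOn_sdiff_singleton_iff, isMatchingOn_sdiff_singleton_iff, isMatchingOn_univ,
    and_assoc]

lemma IsMatchingSet.isMatchingOn_sdiff_edge (hM : IsMatchingSet G M) (h : s(r, x) ∈ M) :
    IsMatchingOn G ((Set.univ \ {r}) \ {x}) (M \ {s(r, x)}) :=
  isMatchingOn_univ_sdiff_sdiff_iff.2 ⟨hM.anti Set.sdiff_subset,
    hM.not_covers_sdiff_singleton h (Sym2.mem_mk_left r x),
    hM.not_covers_sdiff_singleton h (Sym2.mem_mk_right r x)⟩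

lemma IsMatchingSet.insert_edge (hP : IsMatchingSet G P) (hadj : G.Adj r x)
    (hr : ¬ Covers P r) (hx : ¬ Covers P x) : IsMatchingSet G (insert s(r, x) P) := by
  have hdisj : ∀ e ∈ P, ∀ v, ¬(v ∈ s(r, x) ∧ v ∈ e) := by
    rintro e he v ⟨hv, hve⟩
    rcases Sym2.mem_iff.1 hv with rfl | rfl
    exacts [hr ⟨e, he, hve⟩, hx ⟨e, he, hve⟩]
  exact ⟨Set.insert_subset hadj hP.1, Set.pairwise_insert.2
    ⟨hP.2, fun e he _ => ⟨hdisj e he, fun v hv => hdisj e he v hv.symm⟩⟩⟩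

variable [Finite V]

lemma typeA_iff_matchNumOn : TypeA G r ↔ matchNumOn G (Set.univ \ {r}) = matchNumOn G Set.univ := by
  rw [TypeA, maximumMatchings_eq_maxMatchingsOn_univ, exists_maxMatchingsOn_not_covers_iff]

lemma matchNumOn_sdiff_sdiff_add_one_le (hadj : G.Adj r x) :
    matchNumOn G ((Set.univ \ {r}) \ {x}) + 1 ≤ matchNumOn G Set.univ := by
  obtain ⟨P, hP, hPc⟩ := exists_mem_maxMatchingsOn G ((Set.univ \ {r}) \ {x})
  obtain ⟨hP, hPr, hPx⟩ := isMatchingOn_univ_sdiff_sdiff_iff.1 hP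
  have := (isMatchingOn_univ.2 (hP.insert_edge hadj hPr hPx)).ncard_le
  rwa [Set.ncard_insert_of_notMem fun h => hPr ⟨_, h, Sym2.mem_mk_left r x⟩, hPc] at this

lemma matchNumOn_univ_le {n : ℕ} (hr : matchNumOn G (Set.univ \ {r}) ≤ n)
    (hx : ∀ x, G.Adj r x → matchNumOn G ((Set.univ \ {r}) \ {x}) + 1 ≤ n) :
    matchNumOn G Set.univ ≤ n := by
  refine matchNumOn_le fun M hM => ?_
  by_cases hc : Covers M r
  · obtain ⟨x, hadj, hmem⟩ := (isMatchingOn_univ.1 hM).exists_adj_of_covers hc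
    have := ((isMatchingOn_univ.1 hM).isMatchingOn_sdiff_edge hmem).ncard_le
    have := Set.ncard_sdiff_singleton_add_one hmem
    have := hx x hadj
    omega
  · exact (isMatchingOn_sdiff_singleton_iff.2 ⟨hM, hc⟩).ncard_le.trans hr

lemma image_insert_maxMatchingsOn (hadj : G.Adj r x)
    (hkey : matchNumOn G Set.univ = matchNumOn G ((Set.univ \ {r}) \ {x}) + 1) :
    insert s(r, x) '' MaxMatchingsOn G ((Set.univ \ {r}) \ {x}) =
      {M ∈ MaxMatchingsOn G Set.univ | s(r, x) ∈ M} := by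
  ext M
  constructor
  · rintro ⟨P, ⟨hP, hPc⟩, rfl⟩
    obtain ⟨hP, hPr, hPx⟩ := isMatchingOn_univ_sdiff_sdiff_iff.1 hP
    refine ⟨⟨isMatchingOn_univ.2 (hP.insert_edge hadj hPr hPx), ?_⟩,
      Set.mem_insert _ _⟩
    rw [Set.ncard_insert_of_notMem fun h => hPr ⟨_, h, Sym2.mem_mk_left r x⟩, hPc, hkey]
  · rintro ⟨⟨hM, hMc⟩, hmem⟩
    refine ⟨M \ {s(r, x)}, ⟨(isMatchingOn_univ.1 hM).isMatchingOn_sdiff_edge hmem, ?_⟩,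
      by rw [Set.insert_sdiff_singleton, Set.insert_eq_of_mem hmem]⟩
    have := Set.ncard_sdiff_singleton_add_one hmem
    omega

lemma ncard_maxMatchingsOn_univ_edge_mem (hadj : G.Adj r x)
    (hkey : matchNumOn G Set.univ = matchNumOn G ((Set.univ \ {r}) \ {x}) + 1) :
    {M ∈ MaxMatchingsOn G Set.univ | s(r, x) ∈ M}.ncard = mmOn G ((Set.univ \ {r}) \ {x}) := by
  rw [← image_insert_maxMatchingsOn hadj hkey, Set.InjOn.ncard_image, mmOn]
  exact Set.insert_erase_invOn.2.injOn.mono fun P hP h =>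
    (isMatchingOn_univ_sdiff_sdiff_iff.1 hP.1).2.1 ⟨_, h, Sym2.mem_mk_left r x⟩

lemma mmCover_eq_sum (hkey : ∀ x, G.Adj r x →
      matchNumOn G Set.univ = matchNumOn G ((Set.univ \ {r}) \ {x}) + 1) :
    mmCover G r =
      ∑ x ∈ (G.neighborSet r).toFinite.toFinset, mmOn G ((Set.univ \ {r}) \ {x}) := by
  have hcover : {M | M ∈ MaximumMatchings G ∧ Covers M r} =
      ⋃ x ∈ G.neighborSet r, {M ∈ MaxMatchingsOn G Set.univ | s(r, x) ∈ M} := by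
    ext M
    simp only [Set.mem_ofPred_eq, Set.mem_iUnion, maximumMatchings_eq_maxMatchingsOn_univ,
      mem_neighborSet, exists_prop]
    constructor
    · rintro ⟨hM, hc⟩
      obtain ⟨x, hadj, hmem⟩ := (isMatchingOn_univ.1 hM.1).exists_adj_of_covers hc
      exact ⟨x, hadj, hM, hmem⟩
    · rintro ⟨x, -, hM, hmem⟩
      exact ⟨hM, _, hmem, Sym2.mem_mk_left r x⟩
  have hdisj : (G.neighborSet r).PairwiseDisjoint
      fun x => {M ∈ MaxMatchingsOn G Set.univ | s(r, x) ∈ M} := by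
    refine fun x _ y _ hxy => Set.disjoint_left.2 fun M ⟨hM, hxM⟩ ⟨_, hyM⟩ => hxy ?_
    exact Sym2.congr_right.1 <| (isMatchingOn_univ.1 hM.1).eq_of_mem hxM hyM
      (Sym2.mem_mk_left r x) (Sym2.mem_mk_left r y)
  rw [mmCover, hcover, (G.neighborSet r).toFinite.ncard_biUnion (fun _ _ => Set.toFinite _) hdisj,
    finsum_mem_eq_finite_toFinset_sum _ (G.neighborSet r).toFinite]
  exact Finset.sum_congr rfl fun x hx =>
    ncard_maxMatchingsOn_univ_edge_mem (by simpa using hx) (hkey x (by simpa using hx))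

end Root

section RootedTree

variable {V : Type} [Finite V] {G : SimpleGraph V} {r x : V}

lemma branchTypeA_iff (hx : G.Adj r x) :
    BranchTypeA G r x ↔ matchNumOn G (branchSet G r x \ {x}) = matchNumOn G (branchSet G r x) :=
  ⟨fun ⟨h, hA⟩ => exists_maxMatchingsOn_not_covers_iff.1 ((typeA_induce_iff h).1 hA), fun h =>
    ⟨_, (typeA_induce_iff (mem_branchSet_self hx)).2 (exists_maxMatchingsOn_not_covers_iff.2 h)⟩⟩

lemma branchTypeB_iff (hx : G.Adj r x) :
    BranchTypeB G r x ↔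
      matchNumOn G (branchSet G r x \ {x}) + 1 = matchNumOn G (branchSet G r x) := by
  have hB : BranchTypeB G r x ↔ ¬ BranchTypeA G r x :=
    ⟨fun ⟨_, hB⟩ ⟨_, hA⟩ => hB hA, fun h => ⟨mem_branchSet_self hx, fun hA => h ⟨_, hA⟩⟩⟩
  have := matchNumOn_le_sdiff_singleton_add_one (G := G) (S := branchSet G r x) (x := x)
  have := matchNumOn_mono (G := G) (Set.sdiff_subset : branchSet G r x \ {x} ⊆ _)
  rw [hB, branchTypeA_iff hx]
  omega

lemma mmOn_univ_sdiff (hG : G.IsTree) :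
    mmOn G (Set.univ \ {r}) =
      ∏ x ∈ (G.neighborSet r).toFinite.toFinset, mmOn G (branchSet G r x) := by
  rw [← biUnion_branchSet hG.connected,
    mmOn_biUnion (pairwise_separated_branchSet hG.isAcyclic le_rfl)]

variable [DecidableEq V]

lemma univ_sdiff_sdiff_eq_union (hG : G.IsTree) (hx : G.Adj r x) :
    (Set.univ \ {r}) \ {x} = branchSet G r x \ {x} ∪
      ⋃ y ∈ (G.neighborSet r).toFinite.toFinset.erase x, branchSet G r y := by
  rw [← union_biUnion_erase_branchSet hG.connected hx, Set.union_sdiff_distrib,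
    Set.sdiff_singleton_eq_self fun h => Set.disjoint_left.1
      (separated_biUnion_erase_branchSet hG.isAcyclic hx).1 (mem_branchSet_self hx) h]

/-- Stated additively to avoid truncated subtraction: deleting `x` lowers `μ(T - r)` by exactly
as much as it lowers `μ(T_x)`. -/
lemma matchNumOn_univ_sdiff_sdiff_add (hG : G.IsTree) (hx : G.Adj r x) :
    matchNumOn G ((Set.univ \ {r}) \ {x}) + matchNumOn G (branchSet G r x) =
      matchNumOn G (Set.univ \ {r}) + matchNumOn G (branchSet G r x \ {x}) := by
  have hsep := separated_biUnion_erase_branchSet hG.isAcyclic hx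
  rw [univ_sdiff_sdiff_eq_union hG hx, ← union_biUnion_erase_branchSet hG.connected hx,
    matchNumOn_union hsep, matchNumOn_union (hsep.mono Set.sdiff_subset le_rfl)]
  omega

lemma mmOn_univ_sdiff_sdiff (hG : G.IsTree) (hx : G.Adj r x) :
    mmOn G ((Set.univ \ {r}) \ {x}) = mmOn G (branchSet G r x \ {x}) *
      ∏ y ∈ (G.neighborSet r).toFinite.toFinset.erase x, mmOn G (branchSet G r y) := by
  rw [univ_sdiff_sdiff_eq_union hG hx, mmOn_union
    ((separated_biUnion_erase_branchSet hG.isAcyclic hx).mono Set.sdiff_subset le_rfl),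
    mmOn_biUnion (pairwise_separated_branchSet hG.isAcyclic (Finset.erase_subset _ _))]

lemma matchNumOn_univ_of_forall_branchTypeA (hG : G.IsTree) (hr : ∃ x, G.Adj r x)
    (hA : ∀ x, G.Adj r x → BranchTypeA G r x) :
    matchNumOn G Set.univ = matchNumOn G (Set.univ \ {r}) + 1 ∧
      ∀ x, G.Adj r x → matchNumOn G Set.univ = matchNumOn G ((Set.univ \ {r}) \ {x}) + 1 := by
  have hdel : ∀ x, G.Adj r x →
      matchNumOn G ((Set.univ \ {r}) \ {x}) = matchNumOn G (Set.univ \ {r}) := fun x hx => by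
    have := matchNumOn_univ_sdiff_sdiff_add hG hx
    rw [(branchTypeA_iff hx).1 (hA x hx)] at this
    omega
  obtain ⟨x₀, hx₀⟩ := hr
  have hge := matchNumOn_sdiff_sdiff_add_one_le hx₀
  have hle := matchNumOn_le_sdiff_singleton_add_one (G := G) (S := Set.univ) (x := r)
  rw [hdel x₀ hx₀] at hge
  exact ⟨by omega, fun x hx => by rw [hdel x hx]; omega⟩

lemma matchNumOn_univ_of_forall_branchTypeB (hG : G.IsTree)
    (hB : ∀ x, G.Adj r x → BranchTypeB G r x) :
    matchNumOn G Set.univ = matchNumOn G (Set.univ \ {r}) ∧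
      ∀ x, G.Adj r x → matchNumOn G Set.univ = matchNumOn G ((Set.univ \ {r}) \ {x}) + 1 := by
  have hdel : ∀ x, G.Adj r x →
      matchNumOn G ((Set.univ \ {r}) \ {x}) + 1 = matchNumOn G (Set.univ \ {r}) := fun x hx => by
    have := matchNumOn_univ_sdiff_sdiff_add hG hx
    rw [← (branchTypeB_iff hx).1 (hB x hx)] at this
    omega
  have heq : matchNumOn G Set.univ = matchNumOn G (Set.univ \ {r}) :=
    le_antisymm (matchNumOn_univ_le le_rfl fun x hx => (hdel x hx).le)
      (matchNumOn_mono Set.sdiff_subset)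
  exact ⟨heq, fun x hx => by rw [heq, hdel x hx]⟩

end RootedTree

/-- for a rooted tree `(T,r)` of order at least 2 all of whose branches
have the same type, the root has the other type, `m₀(T)` is the product of the `m`
values of the branches, and `m₁(T) = ∑_j m₀(T_j) ∏_{i ≠ j} m(T_i)`. -/
theorem stmt_14 {V : Type} [Fintype V] (G : SimpleGraph V) (r : V)
    (htree : G.IsTree) (horder : 2 ≤ Fintype.card V)
    (hsame : (∀ x : V, G.Adj r x → BranchTypeA G r x) ∨
             (∀ x : V, G.Adj r x → BranchTypeB G r x)) :
    ((∀ x : V, G.Adj r x → BranchTypeA G r x) → TypeB G r) ∧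
    ((∀ x : V, G.Adj r x → BranchTypeB G r x) → TypeA G r) ∧
    mm (G.induce {v | v ≠ r}) =
      (∏ x ∈ (G.neighborSet r).toFinite.toFinset, branchM G r x) ∧
    mmCover G r =
      ∑ x ∈ (G.neighborSet r).toFinite.toFinset,
        branchM0 G r x * ∏ y ∈ (G.neighborSet r \ {x}).toFinite.toFinset, branchM G r y := by
  classical
  have hr : ∃ x, G.Adj r x := by
    obtain ⟨v, hv⟩ := Fintype.exists_ne_of_one_lt_card horder r
    obtain ⟨x, hx, -⟩ := exists_mem_branchSet htree.connected hv
    exact ⟨x, hx⟩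
  have hkey : ∀ x, G.Adj r x →
      matchNumOn G Set.univ = matchNumOn G ((Set.univ \ {r}) \ {x}) + 1 := by
    rcases hsame with hA | hB
    exacts [(matchNumOn_univ_of_forall_branchTypeA htree hr hA).2,
      (matchNumOn_univ_of_forall_branchTypeB htree hB).2]
  simp only [branchM, branchM0, mm_induce]
  refine ⟨fun hA => ?_, fun hB => ?_, ?_, ?_⟩
  · have := (matchNumOn_univ_of_forall_branchTypeA htree hr hA).1
    rw [TypeB, typeA_iff_matchNumOn]
    omega
  · exact typeA_iff_matchNumOn.2 (matchNumOn_univ_of_forall_branchTypeB htree hB).1.symm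
  · rw [← mmOn_univ_sdiff htree]
    congr 1
    ext v
    simp
  · rw [mmCover_eq_sum hkey]
    refine Finset.sum_congr rfl fun x hx => ?_
    rw [mmOn_univ_sdiff_sdiff htree (by simpa using hx)]
    congr 2
    ext y
    simp [and_comm]

end PaperMM
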